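/- Let (X,T) be a minimal Cantor system, A ⊆ X a clopen set, and f ∈ C(X,ℤ) with 0 < [f] < [𝟙_A] in G(X,T). Then there exists a clopen set C ⊆ A such that [𝟙_C] = [f]. -/

import Mathlib

open Set Filter Topology MeasureTheory

/-- A minimal homeomorphism: every two-sided orbit is dense. -/
def IsMinimal {X : Type*} [TopologicalSpace X] (T : X ≃ₜ X) : Prop :=
  ∀ x : X, Dense (Set.range fun n : ℤ => (T.toEquiv ^ n) x)

/-- First return time of `x` to the set `A` under the map `T`. -/
noncomputable def retTime {X : Type*} (T : X → X) (A : Set X) (x : X) : ℕ :=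
  sInf {n : ℕ | 0 < n ∧ T^[n] x ∈ A}

/-- `f` is a `T`-coboundary (with continuous transfer function). -/
def IsCob {X : Type*} [TopologicalSpace X] (T : X → X) (f : X → ℤ) : Prop :=
  ∃ g : X → ℤ, Continuous g ∧ ∀ x, f x = g x - g (T x)

/-- `[f]` is a nonzero positive class in `G(X,T) = C(X,ℤ)/∂_T`. -/
def PosClass {X : Type*} [TopologicalSpace X] (T : X → X) (f : X → ℤ) : Prop :=
  ∃ u : X → ℤ, Continuous u ∧ (∀ x, 0 ≤ u x) ∧ (∃ x, u x ≠ 0) ∧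
    IsCob T (fun x => f x - u x)

/-- The indicator function of a set, with values in `ℤ`. -/
noncomputable def ind {X : Type*} (A : Set X) : X → ℤ := A.indicator fun _ => 1

/-- `[f]` is a nonzero positive class in `G(X,T)/Inf`: `f` is a nonnegative nonzero
continuous function plus a function integrating to zero against every invariant measure. -/
def PosClassInf {X : Type*} [TopologicalSpace X] [MeasurableSpace X]
    (T : X → X) (f : X → ℤ) : Prop :=
  ∃ u k : X → ℤ, Continuous u ∧ (∀ x, 0 ≤ u x) ∧ (∃ x, u x ≠ 0) ∧ Continuous k ∧
    (∀ μ : Measure X, IsProbabilityMeasure μ → Measure.map T μ = μ →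
      ∫ x, (k x : ℝ) ∂μ = 0) ∧
    (∀ x, f x = u x + k x)

/-!
Write `[f] = [v]` and `[𝟙_A - f] = [u]` with `u, v ≥ 0`, so that `𝟙_A - v - u = g - g ∘ T` for a
continuous `g`. On a level set `B` of `g`, which is clopen and, by minimality, met by every forward
and backward orbit, the sum of `𝟙_A - v - u` over a first-return excursion telescopes to `0`. Hence
each column of the Kakutani–Rokhlin tower over `B` visits `A` at least as often as the sum of `v`
over it, and one can let `C` consist of the first that many visits. Then `𝟙_C - v` sums to zero
over every excursion, so it is a coboundary, and `[𝟙_C] = [v] = [f]`.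
-/

open Function

theorem Homeomorph.toEquiv_zpow {X : Type*} [TopologicalSpace X] (T : X ≃ₜ X) (n : ℤ) :
    (T ^ n).toEquiv = T.toEquiv ^ n :=
  map_zpow ({ toFun := Homeomorph.toEquiv, map_one' := rfl, map_mul' := fun _ _ => rfl } :
    (X ≃ₜ X) →* Equiv.Perm X) T n

theorem Continuous.apply_of_discrete_index {X Y ι : Type*} [TopologicalSpace X]
    [TopologicalSpace Y] [TopologicalSpace ι] [DiscreteTopology ι] {s : X → ι}
    (hs : Continuous s) {F : ι → X → Y} (hF : ∀ i, Continuous (F i)) :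
    Continuous fun x => F (s x) x :=
  continuous_iff_continuousAt.2 fun x => (hF (s x)).continuousAt.congr <|
    (hs.continuousAt.eventually_mem ((isOpen_discrete {s x}).mem_nhds rfl)).mono
      fun y hy => congrArg (F · y) hy.symm

theorem continuous_birkhoffSum {X M : Type*} [TopologicalSpace X] [TopologicalSpace M]
    [AddCommMonoid M] [ContinuousAdd M] {T : X → X} (hT : Continuous T) {g : X → M}
    (hg : Continuous g) (n : ℕ) : Continuous (birkhoffSum T g n) :=
  continuous_finsetSum _ fun k _ => hg.comp (hT.iterate k)

theorem birkhoffSum_eq_sub_of_forall_eq_sub {X G : Type*} [AddCommGroup G] {T : X → X}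
    {w g : X → G} (hw : ∀ x, w x = g x - g (T x)) (n : ℕ) (x : X) :
    birkhoffSum T w n x = g x - g (T^[n] x) := by
  simp only [birkhoffSum, hw, ← iterate_succ_apply' T]
  exact Finset.sum_range_sub' (fun k => g (T^[k] x)) n

theorem Finset.sum_range_ite_and_count_lt (p : ℕ → Prop) [DecidablePred p] {V : ℤ} {r : ℕ}
    (hV₀ : 0 ≤ V) (hV : V ≤ ∑ i ∈ range r, if p i then 1 else 0) :
    ∑ i ∈ range r, (if p i ∧ ∑ k ∈ range i, (if p k then 1 else 0) < V then 1 else 0) = V := by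
  set count : ℕ → ℤ := fun i => ∑ k ∈ range i, if p k then 1 else 0
  have hstep (i : ℕ) : (if p i ∧ count i < V then 1 else 0) =
      min (count (i + 1)) V - min (count i) V := by
    have hsucc : count (i + 1) = count i + if p i then 1 else 0 := sum_range_succ _ i
    rw [hsucc]
    by_cases hp : p i <;> by_cases hc : count i < V <;>
      simp only [hp, hc, and_self, and_true, and_false, if_true, if_false, add_zero] <;> omega
  rw [sum_congr rfl fun i _ => hstep i, sum_range_sub (fun i => min (count i) V)]
  simp only [count, sum_range_zero]
  rw [min_eq_right hV, min_eq_left hV₀, sub_zero]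

noncomputable def hitTime {X : Type*} (T : X → X) (B : Set X) (y : X) : ℕ :=
  sInf {n : ℕ | T^[n] y ∈ B}

section HitTime

variable {X : Type*} {T : X → X} {B : Set X} {y : X}

theorem iterate_hitTime_mem (h : ∃ n, T^[n] y ∈ B) : T^[hitTime T B y] y ∈ B :=
  Nat.sInf_mem h

theorem hitTime_le {n : ℕ} (hn : T^[n] y ∈ B) : hitTime T B y ≤ n :=
  Nat.sInf_le hn

theorem hitTime_eq_zero (hy : y ∈ B) : hitTime T B y = 0 :=
  Nat.eq_zero_of_le_zero (hitTime_le (n := 0) hy)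

theorem hitTime_eq_iff (h : ∃ n, T^[n] y ∈ B) {m : ℕ} :
    hitTime T B y = m ↔ T^[m] y ∈ B ∧ ∀ k < m, T^[k] y ∉ B := by
  classical
  rw [hitTime, Nat.sInf_def (s := {n | T^[n] y ∈ B}) h]
  exact Nat.find_eq_iff h

theorem hitTime_eq_hitTime_apply_add_one (hy : y ∉ B) (h : ∃ n, T^[n] (T y) ∈ B) :
    hitTime T B y = hitTime T B (T y) + 1 := by
  have hpos : 1 ≤ hitTime T B y := by
    obtain ⟨n, hn⟩ := h
    refine Nat.one_le_iff_ne_zero.2 fun h0 => hy ?_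
    simpa [h0] using iterate_hitTime_mem (T := T) (B := B) ⟨n + 1, hn⟩
  exact (Nat.sInf_add hpos).symm

theorem retTime_eq_hitTime_apply_add_one (h : ∃ n, T^[n] (T y) ∈ B) :
    retTime T B y = hitTime T B (T y) + 1 := by
  have hpos : 1 ≤ retTime T B y := by
    obtain ⟨n, hn⟩ := h
    exact (Nat.sInf_mem (s := {n | 0 < n ∧ T^[n] y ∈ B}) ⟨n + 1, n.succ_pos, hn⟩).1
  rw [retTime, ← Nat.sInf_add hpos]
  simp only [Nat.add_pos_right _ Nat.one_pos, true_and]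
  rfl

theorem iterate_retTime_mem (h : ∃ n, T^[n] (T y) ∈ B) : T^[retTime T B y] y ∈ B := by
  obtain ⟨n, hn⟩ := h
  exact (Nat.sInf_mem (s := {n | 0 < n ∧ T^[n] y ∈ B}) ⟨n + 1, n.succ_pos, hn⟩).2

variable [TopologicalSpace X]

theorem continuous_hitTime (hT : Continuous T) (hB : IsClopen B) (h : ∀ y, ∃ n, T^[n] y ∈ B) :
    Continuous (hitTime T B) := by
  refine continuous_discrete_rng.2 fun m => ?_
  have hlevel : hitTime T B ⁻¹' {m} = T^[m] ⁻¹' B ∩ ⋂ k ∈ Finset.range m, (T^[k] ⁻¹' B)ᶜ := by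
    ext y
    simp [hitTime_eq_iff (h y)]
  rw [hlevel]
  exact (hB.isOpen.preimage (hT.iterate m)).inter <| isOpen_biInter_finset fun k _ =>
    (hB.isClosed.preimage (hT.iterate k)).isOpen_compl

theorem continuous_retTime (hT : Continuous T) (hB : IsClopen B) (h : ∀ y, ∃ n, T^[n] y ∈ B) :
    Continuous (retTime T B) := by
  have : retTime T B = fun y => hitTime T B (T y) + 1 :=
    funext fun y => retTime_eq_hitTime_apply_add_one (h (T y))
  rw [this]
  exact ((continuous_hitTime hT hB h).comp hT).add continuous_const

/-- The transfer function sums `w` along the orbit until it first enters `B`. -/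
theorem isCob_of_birkhoffSum_retTime_eq_zero (hT : Continuous T) (hB : IsClopen B)
    (h : ∀ y, ∃ n, T^[n] y ∈ B) {w : X → ℤ} (hw : Continuous w)
    (hsum : ∀ x ∈ B, birkhoffSum T w (retTime T B x) x = 0) : IsCob T w := by
  refine ⟨fun y => birkhoffSum T w (hitTime T B y) y,
    (continuous_hitTime hT hB h).apply_of_discrete_index (continuous_birkhoffSum hT hw),
    fun y => ?_⟩
  dsimp only
  by_cases hy : y ∈ B
  · have hret := hsum y hy
    rw [retTime_eq_hitTime_apply_add_one (h (T y)), birkhoffSum_succ'] at hret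
    rw [hitTime_eq_zero hy, birkhoffSum_zero]
    linear_combination hret
  · rw [hitTime_eq_hitTime_apply_add_one hy (h (T y)), birkhoffSum_succ']
    ring

end HitTime

section Tower

variable {X : Type*} [TopologicalSpace X] (T : X ≃ₜ X) {B : Set X}

theorem Homeomorph.symm_iterate_iterate_of_le {k i : ℕ} (hki : k ≤ i) (x : X) :
    T.symm^[k] (T^[i] x) = T^[i - k] x := by
  conv_lhs => rw [← Nat.add_sub_cancel' hki, iterate_add_apply]
  exact (LeftInverse.iterate T.symm_apply_apply k) _

theorem hitTime_symm_iterate {x : X} (hx : x ∈ B) {i : ℕ} (hi : i < retTime T B x) :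
    hitTime T.symm B (T^[i] x) = i := by
  have hbase : T.symm^[i] (T^[i] x) = x := LeftInverse.iterate T.symm_apply_apply i x
  have hmem : T.symm^[i] (T^[i] x) ∈ B := hbase.symm ▸ hx
  refine (hitTime_eq_iff ⟨i, hmem⟩).2 ⟨hmem, fun k hk hkB => ?_⟩
  rw [T.symm_iterate_iterate_of_le hk.le] at hkB
  exact Nat.notMem_of_lt_sInf (lt_of_le_of_lt (Nat.sub_le i k) hi) ⟨Nat.sub_pos_of_lt hk, hkB⟩

/-- `C` consists of the first `V x` visits to `A` in the column over each `x ∈ B`. -/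
theorem exists_isClopen_subset_birkhoffSum_ind_eq {A : Set X} (hA : IsClopen A)
    (hB : IsClopen B) (hback : ∀ y, ∃ n, T.symm^[n] y ∈ B) {V : X → ℤ} (hV : Continuous V)
    (hV₀ : ∀ x ∈ B, 0 ≤ V x) (hVA : ∀ x ∈ B, V x ≤ birkhoffSum T (ind A) (retTime T B x) x) :
    ∃ C ⊆ A, IsClopen C ∧ ∀ x ∈ B, birkhoffSum T (ind C) (retTime T B x) x = V x := by
  classical
  set level := hitTime T.symm B
  set quota : ℕ → X → ℤ := fun n y =>
    V (T.symm^[n] y) - birkhoffSum T (ind A) n (T.symm^[n] y)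
  set C := A ∩ {y | 0 < quota (level y) y}
  have hquota : Continuous fun y => quota (level y) y :=
    (continuous_hitTime T.symm.continuous hB hback).apply_of_discrete_index fun n =>
      (hV.comp (T.symm.continuous.iterate n)).sub
        ((continuous_birkhoffSum T.continuous (hA.continuous_indicator continuous_const) n).comp
          (T.symm.continuous.iterate n))
  refine ⟨C, inter_subset_left, hA.inter ((isClopen_discrete _).preimage hquota), fun x hx => ?_⟩
  have hind (S : Set X) (i : ℕ) : ind S (T^[i] x) = if T^[i] x ∈ S then 1 else 0 :=
    indicator_apply _ _ _
  have hmemC {i : ℕ} (hi : i < retTime T B x) :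
      T^[i] x ∈ C ↔ T^[i] x ∈ A ∧ birkhoffSum T (ind A) i x < V x := by
    have hbase : T.symm^[i] (T^[i] x) = x := LeftInverse.iterate T.symm_apply_apply i x
    simp only [C, quota, level, mem_inter_iff, mem_ofPred_eq, hitTime_symm_iterate T hx hi,
      hbase, sub_pos]
  have hA' := hVA x hx
  simp only [birkhoffSum, hind] at hA' ⊢
  rw [← Finset.sum_range_ite_and_count_lt (fun i => T^[i] x ∈ A) (hV₀ x hx) hA']
  refine Finset.sum_congr rfl fun i hi => ?_
  simp only [hmemC (Finset.mem_range.1 hi), birkhoffSum, hind]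

end Tower

section Minimal

variable {X : Type*} [TopologicalSpace X] {T : X ≃ₜ X}

theorem IsMinimal.symm (hT : IsMinimal T) : IsMinimal T.symm := by
  intro x
  have hpow (n : ℤ) : T.symm.toEquiv ^ n = T.toEquiv ^ (-n) := inv_zpow' T.toEquiv n
  simp only [hpow]
  exact ((Equiv.neg ℤ).surjective.range_comp fun n => (T.toEquiv ^ n) x).symm ▸ hT x

theorem IsMinimal.exists_iterate_mem [CompactSpace X] (hT : IsMinimal T) {B : Set X}
    (hB : IsOpen B) (hne : B.Nonempty) (y : X) : ∃ n : ℕ, T^[n] y ∈ B := by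
  have hcont (n : ℤ) : Continuous (T.toEquiv ^ n) := by
    rw [← Homeomorph.toEquiv_zpow]
    exact (T ^ n).continuous
  obtain ⟨I, hI⟩ := isCompact_univ.elim_finite_subcover (fun n : ℤ => (T.toEquiv ^ n) ⁻¹' B)
    (fun n => hB.preimage (hcont n)) fun z _ => by
      obtain ⟨_, ⟨n, rfl⟩, hn⟩ := (hT z).exists_mem_open hB hne
      exact mem_iUnion.2 ⟨n, hn⟩
  -- every exponent in `I` is at least `-M`, so from `T^M y` the orbit enters `B` in `≥ -M` steps
  set M := I.sup Int.natAbs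
  obtain ⟨n, hnI, hn⟩ := mem_iUnion₂.1 (hI (mem_univ ((T.toEquiv ^ (M : ℤ)) y)))
  have hnM : 0 ≤ n + M := by
    have : n.natAbs ≤ M := Finset.le_sup (f := Int.natAbs) hnI
    omega
  refine ⟨(n + M).toNat, ?_⟩
  rw [mem_preimage, ← Equiv.Perm.mul_apply, ← zpow_add, ← Int.toNat_of_nonneg hnM,
    zpow_natCast, ← Equiv.Perm.iterate_eq_pow] at hn
  exact hn

end Minimal

theorem stmt7_general {X : Type*} [MetricSpace X] [CompactSpace X]
    (T : X ≃ₜ X) (hmin : IsMinimal T)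
    (A : Set X) (hA : IsClopen A)
    (f : X → ℤ)
    (hfpos : PosClass (⇑T) f) (hAf : PosClass (⇑T) (fun x => ind A x - f x)) :
    ∃ C : Set X, C ⊆ A ∧ IsClopen C ∧ IsCob (⇑T) (fun x => ind C x - f x) := by
  obtain ⟨v, hv, hv₀, -, g₂, hg₂, hfv⟩ := hfpos
  obtain ⟨u, -, hu₀, -, g₁, hg₁, hAfu⟩ := hAf
  obtain hX | ⟨⟨x₀⟩⟩ := isEmpty_or_nonempty X
  · exact ⟨∅, empty_subset _, isClopen_empty, 0, continuous_const, isEmptyElim⟩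
  set g := g₁ + g₂
  have hg (x : X) : (ind A - v - u) x = g x - g (T x) := by
    simp only [g, Pi.add_apply, Pi.sub_apply]
    linarith [hfv x, hAfu x]
  set B := g ⁻¹' {g x₀}
  have hB : IsClopen B := (isClopen_discrete _).preimage (hg₁.add hg₂)
  have hfwd := hmin.exists_iterate_mem hB.isOpen ⟨x₀, rfl⟩
  have hVA (x : X) (hx : x ∈ B) :
      birkhoffSum T v (retTime T B x) x ≤ birkhoffSum T (ind A) (retTime T B x) x := by
    have hzero := birkhoffSum_eq_sub_of_forall_eq_sub hg (retTime T B x) x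
    rw [hx, iterate_retTime_mem (hfwd (T x)), sub_self, birkhoffSum_sub, birkhoffSum_sub] at hzero
    have hu : 0 ≤ birkhoffSum T u (retTime T B x) x :=
      Finset.sum_nonneg fun k _ => hu₀ _
    linarith
  obtain ⟨C, hCA, hC, hCv⟩ := exists_isClopen_subset_birkhoffSum_ind_eq T hA hB
    (hmin.symm.exists_iterate_mem hB.isOpen ⟨x₀, rfl⟩)
    ((continuous_retTime T.continuous hB hfwd).apply_of_discrete_index
      (continuous_birkhoffSum T.continuous hv))
    (fun x _ => Finset.sum_nonneg fun k _ => hv₀ _) hVA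
  obtain ⟨G, hG, hGw⟩ := isCob_of_birkhoffSum_retTime_eq_zero T.continuous hB hfwd
    (w := ind C - v) ((hC.continuous_indicator continuous_const).sub hv)
    fun x hx => by rw [birkhoffSum_sub, hCv x hx, sub_self]
  refine ⟨C, hCA, hC, G - g₂, hG.sub hg₂, fun x => ?_⟩
  simp only [Pi.sub_apply] at hGw ⊢
  linarith [hGw x, hfv x]

theorem stmt7 {X : Type*} [MetricSpace X] [CompactSpace X] [PerfectSpace X]
    [TotallyDisconnectedSpace X]
    (T : X ≃ₜ X) (hmin : IsMinimal T)
    (A : Set X) (hA : IsClopen A)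
    (f : X → ℤ) (hf : Continuous f)
    (hfpos : PosClass (⇑T) f) (hAf : PosClass (⇑T) (fun x => ind A x - f x)) :
    ∃ C : Set X, C ⊆ A ∧ IsClopen C ∧ IsCob (⇑T) (fun x => ind C x - f x) :=
  stmt7_general T hmin A hA f hfpos hAf
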